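/- Let H be a finite-dimensional weak Hopf algebra, g, h group-like elements of H, and L_g := {φ ∈ H* : ψφ = ε_t^g(ψ)φ for all ψ ∈ H*}, where ε_t^g(ψ) := S(ε₁)⟨ε₂ψ, g⟩ (with Δ(ε) = ε₁⊗ε₂ in H*). Then the map φ ↦ (h⇀φ) is a linear isomorphism from L_g onto L_{gh⁻¹}. -/
import Mathlib


open TensorProduct

/-- A weak Hopf algebra over a field `k` (Böhm–Nill–Szlachányi):
an algebra and coalgebra with multiplicative comultiplication, the weak
unit/counit axioms, and an antipode. -/
structure WeakHopf (k H : Type*) [Field k] [Ring H] [Algebra k H] where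
  comul : H →ₗ[k] H ⊗[k] H
  counit : H →ₗ[k] k
  antipode : H →ₗ[k] H
  coassoc : ∀ h : H,
    (TensorProduct.assoc k H H H) ((TensorProduct.map comul LinearMap.id) (comul h)) =
      (TensorProduct.map LinearMap.id comul) (comul h)
  counit_comul : ∀ h : H,
    (TensorProduct.lid k H) ((TensorProduct.map counit LinearMap.id) (comul h)) = h
  comul_counit : ∀ h : H,
    (TensorProduct.rid k H) ((TensorProduct.map LinearMap.id counit) (comul h)) = h
  comul_mul : ∀ a b : H, comul (a * b) = comul a * comul b
  -- (Δ⊗id)Δ(1) = (Δ(1)⊗1)(1⊗Δ(1)) = (1⊗Δ(1))(Δ(1)⊗1)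
  weak_unit_left :
    (TensorProduct.map comul LinearMap.id) (comul 1) =
      (comul 1 ⊗ₜ[k] (1 : H)) *
        ((TensorProduct.assoc k H H H).symm ((1 : H) ⊗ₜ[k] comul 1))
  weak_unit_right :
    (TensorProduct.map comul LinearMap.id) (comul 1) =
      ((TensorProduct.assoc k H H H).symm ((1 : H) ⊗ₜ[k] comul 1)) *
        (comul 1 ⊗ₜ[k] (1 : H))
  -- ε(fgh) = ε(fg₁)ε(g₂h) = ε(fg₂)ε(g₁h)
  weak_counit_left : ∀ f g h : H,
    counit (f * g * h) =
      (TensorProduct.lid k k)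
        ((TensorProduct.map (counit ∘ₗ LinearMap.mulLeft k f)
          (counit ∘ₗ LinearMap.mulRight k h)) (comul g))
  weak_counit_right : ∀ f g h : H,
    counit (f * g * h) =
      (TensorProduct.lid k k)
        ((TensorProduct.map (counit ∘ₗ LinearMap.mulLeft k f)
          (counit ∘ₗ LinearMap.mulRight k h)) ((TensorProduct.comm k H H) (comul g)))
  -- h₁S(h₂) = ε(1₁h)1₂  (target counital map)
  antipode_right : ∀ h : H,
    (LinearMap.mul' k H) ((TensorProduct.map LinearMap.id antipode) (comul h)) =
      (TensorProduct.lid k H)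
        ((TensorProduct.map (counit ∘ₗ LinearMap.mulRight k h) LinearMap.id) (comul 1))
  -- S(h₁)h₂ = 1₁ε(h1₂)  (source counital map)
  antipode_left : ∀ h : H,
    (LinearMap.mul' k H) ((TensorProduct.map antipode LinearMap.id) (comul h)) =
      (TensorProduct.rid k H)
        ((TensorProduct.map LinearMap.id (counit ∘ₗ LinearMap.mulLeft k h)) (comul 1))
  -- S(h₁)h₂S(h₃) = S(h)
  antipode_mid : ∀ h : H,
    (LinearMap.mul' k H)
      ((TensorProduct.map (LinearMap.mul' k H ∘ₗ TensorProduct.map antipode LinearMap.id)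
        antipode) ((TensorProduct.map comul LinearMap.id) (comul h))) = antipode h

namespace WeakHopf

variable {k H : Type*} [Field k] [Ring H] [Algebra k H] (W : WeakHopf k H)

/-- The target counital map ε_t(h) = ε(1₁h)1₂, as a linear map. -/
noncomputable def εtL : H →ₗ[k] H :=
  (TensorProduct.lid k H).toLinearMap
    ∘ₗ TensorProduct.map
        (W.counit ∘ₗ LinearMap.mul' k H ∘ₗ (TensorProduct.comm k H H).toLinearMap)
        LinearMap.id
    ∘ₗ (TensorProduct.assoc k H H H).symm.toLinearMap
    ∘ₗ (TensorProduct.mk k H (H ⊗[k] H)).flip (W.comul 1)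

/-- The source counital map ε_s(h) = 1₁ε(h1₂), as a linear map. -/
noncomputable def εsL : H →ₗ[k] H :=
  (TensorProduct.rid k H).toLinearMap
    ∘ₗ TensorProduct.map LinearMap.id
        (W.counit ∘ₗ LinearMap.mul' k H ∘ₗ (TensorProduct.comm k H H).toLinearMap)
    ∘ₗ (TensorProduct.assoc k H H H).toLinearMap
    ∘ₗ (TensorProduct.mk k (H ⊗[k] H) H) (W.comul 1)

/-- The minimal weak Hopf subalgebra H_min = H_t H_s (as a subspace). -/
noncomputable def Hmin : Submodule k H :=
  Submodule.span k
    {x : H | ∃ z ∈ Set.range ⇑W.εtL, ∃ y ∈ Set.range ⇑W.εsL, x = z * y}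

/-- g ∈ H is group-like: invertible and Δ(g) = (g⊗g)Δ(1) = Δ(1)(g⊗g). -/
def IsGroupLike (g : H) : Prop :=
  IsUnit g ∧ W.comul g = (g ⊗ₜ[k] g) * W.comul 1 ∧
    W.comul g = W.comul 1 * (g ⊗ₜ[k] g)

/-- The convolution product on H* = (H →ₗ[k] k): ⟨φψ, h⟩ = ⟨φ, h₁⟩⟨ψ, h₂⟩. -/
noncomputable def dualMul (φ ψ : H →ₗ[k] k) : H →ₗ[k] k :=
  (TensorProduct.lid k k).toLinearMap ∘ₗ TensorProduct.map φ ψ ∘ₗ W.comul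

/-- γ ∈ H* is group-like: invertible in H* and
⟨γ,hg⟩ = ⟨γ,h1₁⟩⟨γ,S(1₂)g⟩ = ⟨γ,hS(1₁)⟩⟨γ,1₂g⟩ for all h,g. -/
noncomputable def IsGroupLikeDual (γ : H →ₗ[k] k) : Prop :=
  (∃ β : H →ₗ[k] k, W.dualMul γ β = W.counit ∧ W.dualMul β γ = W.counit) ∧
  (∀ h g : H, γ (h * g) =
    (TensorProduct.lid k k)
      ((TensorProduct.map (γ ∘ₗ LinearMap.mulLeft k h)
        (γ ∘ₗ LinearMap.mulRight k g ∘ₗ W.antipode)) (W.comul 1))) ∧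
  (∀ h g : H, γ (h * g) =
    (TensorProduct.lid k k)
      ((TensorProduct.map (γ ∘ₗ LinearMap.mulLeft k h ∘ₗ W.antipode)
        (γ ∘ₗ LinearMap.mulRight k g)) (W.comul 1)))

/-- x is a left integral in H: hx = ε_t(h)x for all h. -/
def IsLeftIntegral (x : H) : Prop := ∀ h : H, h * x = W.εtL h * x

/-- The space of left integrals in H. -/
noncomputable def leftIntegrals : Submodule k H where
  carrier := {x : H | ∀ h : H, h * x = W.εtL h * x}
  add_mem' := fun ha hb h => by rw [mul_add, ha h, hb h, mul_add]
  zero_mem' := fun h => by rw [mul_zero, mul_zero]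
  smul_mem' := fun c x hx h => by rw [mul_smul_comm, hx h, mul_smul_comm]

/-- λ ∈ H* is a left integral in H*: equivalently h₁λ(h₂) = ε_s(h₁)λ(h₂). -/
noncomputable def IsLeftIntegralDual (lam : H →ₗ[k] k) : Prop :=
  ∀ h : H,
    (TensorProduct.rid k H) ((TensorProduct.map LinearMap.id lam) (W.comul h)) =
      (TensorProduct.rid k H) ((TensorProduct.map W.εsL lam) (W.comul h))

/-- The action y·h := ⟨γ, yh1₁⟩S(1₂) of H on H_s associated to γ ∈ H*. -/
noncomputable def act (γ : H →ₗ[k] k) (y h : H) : H :=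
  (TensorProduct.lid k H)
    ((TensorProduct.map (γ ∘ₗ LinearMap.mulLeft k (y * h)) W.antipode) (W.comul 1))

/-- ε_t^g(ψ) ∈ H*, given by ⟨ε_t^g(ψ), x⟩ = ε(S(x)g₁)ψ(g₂). -/
noncomputable def etg (g : H) (ψ : H →ₗ[k] k) : H →ₗ[k] k :=
  (TensorProduct.lid k k).toLinearMap
    ∘ₗ TensorProduct.map (W.counit ∘ₗ LinearMap.mul' k H) ψ
    ∘ₗ (TensorProduct.assoc k H H H).symm.toLinearMap
    ∘ₗ (TensorProduct.mk k H (H ⊗[k] H)).flip (W.comul g)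
    ∘ₗ W.antipode

/-- L_g = {φ ∈ H* : ψφ = ε_t^g(ψ)φ for all ψ}. -/
noncomputable def Lset (g : H) : Set (H →ₗ[k] k) :=
  {φ | ∀ ψ : H →ₗ[k] k, W.dualMul ψ φ = W.dualMul (W.etg g ψ) φ}

end WeakHopf


namespace WeakHopf

section Aux

open TensorProduct LinearMap

variable {k H : Type*} [Field k] [Ring H] [Algebra k H] (W : WeakHopf k H)

set_option synthInstance.maxHeartbeats 400000

/-- multiplying a tensor by a pure tensor on the right. -/
lemma mul_pure (t : H ⊗[k] H) (a b : H) :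
    t * (a ⊗ₜ[k] b) = TensorProduct.map (mulRight k a) (mulRight k b) t := by
  induction t using TensorProduct.induction_on with
  | zero => simp
  | tmul x y => simp [Algebra.TensorProduct.tmul_mul_tmul]
  | add x y hx hy => rw [add_mul, hx, hy, map_add]

/-- multiplying a tensor by a pure tensor on the left. -/
lemma pure_mul (t : H ⊗[k] H) (a b : H) :
    (a ⊗ₜ[k] b) * t = TensorProduct.map (mulLeft k a) (mulLeft k b) t := by
  induction t using TensorProduct.induction_on with
  | zero => simp
  | tmul x y => simp [Algebra.TensorProduct.tmul_mul_tmul]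
  | add x y hx hy => rw [mul_add, hx, hy, map_add]

lemma map_map {A B C D E F : Type*} [AddCommMonoid A] [Module k A]
    [AddCommMonoid B] [Module k B] [AddCommMonoid C] [Module k C]
    [AddCommMonoid D] [Module k D] [AddCommMonoid E] [Module k E]
    [AddCommMonoid F] [Module k F]
    (f : C →ₗ[k] E) (g : D →ₗ[k] F) (p : A →ₗ[k] C) (q : B →ₗ[k] D) (t : A ⊗[k] B) :
    TensorProduct.map f g (TensorProduct.map p q t)
      = TensorProduct.map (f ∘ₗ p) (g ∘ₗ q) t := by
  rw [← LinearMap.comp_apply, ← TensorProduct.map_comp]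

lemma lid_map_right (f : H →ₗ[k] k) (g : H →ₗ[k] H) (b : H) (t : H ⊗[k] H) :
    (TensorProduct.lid k H) (TensorProduct.map f (mulRight k b ∘ₗ g) t)
      = (TensorProduct.lid k H) (TensorProduct.map f g t) * b := by
  induction t using TensorProduct.induction_on with
  | zero => simp
  | tmul x y => simp [smul_mul_assoc]
  | add x y hx hy => simp [hx, hy, add_mul]

lemma lid_map_right' (f : H →ₗ[k] k) (b : H) (t : H ⊗[k] H) :
    (TensorProduct.lid k H) (TensorProduct.map f (mulRight k b) t)
      = (TensorProduct.lid k H) (TensorProduct.map f LinearMap.id t) * b := by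
  induction t using TensorProduct.induction_on with
  | zero => simp
  | tmul x y => simp [smul_mul_assoc]
  | add x y hx hy => simp [hx, hy, add_mul]

lemma rid_map_left' (f : H →ₗ[k] k) (b : H) (t : H ⊗[k] H) :
    (TensorProduct.rid k H) (TensorProduct.map (mulLeft k b) f t)
      = b * (TensorProduct.rid k H) (TensorProduct.map LinearMap.id f t) := by
  induction t using TensorProduct.induction_on with
  | zero => simp
  | tmul x y => simp [mul_smul_comm]
  | add x y hx hy => simp [hx, hy, mul_add]

lemma rid_map_left (f : H →ₗ[k] H) (g : H →ₗ[k] k) (b : H) (t : H ⊗[k] H) :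
    (TensorProduct.rid k H) (TensorProduct.map (mulLeft k b ∘ₗ f) g t)
      = b * (TensorProduct.rid k H) (TensorProduct.map f g t) := by
  induction t using TensorProduct.induction_on with
  | zero => simp
  | tmul x y => simp [mul_smul_comm]
  | add x y hx hy => simp [hx, hy, mul_add]

lemma rid_map_conj (a b : H) (f : H →ₗ[k] H) (g : H →ₗ[k] k) (t : H ⊗[k] H) :
    (TensorProduct.rid k H)
        (TensorProduct.map (mulLeft k a ∘ₗ mulRight k b ∘ₗ f) g t)
      = a * (TensorProduct.rid k H) (TensorProduct.map f g t) * b := by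
  induction t using TensorProduct.induction_on with
  | zero => simp
  | tmul x y =>
    simp only [TensorProduct.map_tmul, LinearMap.comp_apply, mulLeft_apply,
      mulRight_apply, TensorProduct.rid_tmul]
    rw [mul_smul_comm, smul_mul_assoc, mul_assoc]
  | add x y hx hy => simp [hx, hy, mul_add, add_mul]

lemma mul'_map_leftc (a : H) (f g : H →ₗ[k] H) (t : H ⊗[k] H) :
    LinearMap.mul' k H (TensorProduct.map (mulLeft k a ∘ₗ f) g t)
      = a * LinearMap.mul' k H (TensorProduct.map f g t) := by
  induction t using TensorProduct.induction_on with
  | zero => simp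
  | tmul x y => simp [mul_assoc]
  | add x y hx hy => simp [hx, hy, mul_add]

lemma mul'_map_cancel {h h' : H} (hhh' : h * h' = 1) (f g : H →ₗ[k] H) (t : H ⊗[k] H) :
    LinearMap.mul' k H
        (TensorProduct.map (mulRight k h ∘ₗ f) (mulLeft k h' ∘ₗ g) t)
      = LinearMap.mul' k H (TensorProduct.map f g t) := by
  induction t using TensorProduct.induction_on with
  | zero => simp
  | tmul x y =>
    simp only [TensorProduct.map_tmul, LinearMap.comp_apply, mulLeft_apply,
      mulRight_apply, LinearMap.mul'_apply]
    rw [mul_assoc, ← mul_assoc h h', hhh', one_mul]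
  | add x y hx hy => simp [hx, hy]

lemma mul'_map_conj (a b : H) (f g : H →ₗ[k] H) (t : H ⊗[k] H) :
    LinearMap.mul' k H
        (TensorProduct.map (mulLeft k a ∘ₗ f) (mulRight k b ∘ₗ g) t)
      = a * LinearMap.mul' k H (TensorProduct.map f g t) * b := by
  induction t using TensorProduct.induction_on with
  | zero => simp
  | tmul x y =>
    simp only [TensorProduct.map_tmul, LinearMap.comp_apply, mulLeft_apply,
      mulRight_apply, LinearMap.mul'_apply]
    rw [mul_assoc, mul_assoc, mul_assoc]
  | add x y hx hy => simp [hx, hy, mul_add, add_mul]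

lemma lidk_comm (f g : H →ₗ[k] k) (t : H ⊗[k] H) :
    (TensorProduct.lid k k) (TensorProduct.map f g ((TensorProduct.comm k H H) t))
      = (TensorProduct.lid k k) (TensorProduct.map g f t) := by
  induction t using TensorProduct.induction_on with
  | zero => simp
  | tmul x y => simp [smul_eq_mul, mul_comm]
  | add x y hx hy => simp [hx, hy]

lemma εtL_eq (x : H) :
    W.εtL x = (TensorProduct.lid k H)
      (TensorProduct.map (W.counit ∘ₗ mulRight k x) LinearMap.id (W.comul 1)) := by
  have key : ∀ t : H ⊗[k] H,
      (TensorProduct.lid k H)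
        (TensorProduct.map
          (W.counit ∘ₗ LinearMap.mul' k H ∘ₗ (TensorProduct.comm k H H).toLinearMap)
          LinearMap.id ((TensorProduct.assoc k H H H).symm (x ⊗ₜ[k] t)))
      = (TensorProduct.lid k H)
        (TensorProduct.map (W.counit ∘ₗ mulRight k x) LinearMap.id t) := by
    intro t
    induction t using TensorProduct.induction_on with
    | zero => simp
    | tmul a b => simp [TensorProduct.assoc_symm_tmul]
    | add a b ha hb => simp [TensorProduct.tmul_add, ha, hb]
  simpa [εtL, LinearMap.comp_apply, TensorProduct.mk_apply, LinearMap.flip_apply]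
    using key (W.comul 1)

lemma εsL_eq (x : H) :
    W.εsL x = (TensorProduct.rid k H)
      (TensorProduct.map LinearMap.id (W.counit ∘ₗ mulLeft k x) (W.comul 1)) := by
  have key : ∀ t : H ⊗[k] H,
      (TensorProduct.rid k H)
        (TensorProduct.map LinearMap.id
          (W.counit ∘ₗ LinearMap.mul' k H ∘ₗ (TensorProduct.comm k H H).toLinearMap)
          ((TensorProduct.assoc k H H H) (t ⊗ₜ[k] x)))
      = (TensorProduct.rid k H)
        (TensorProduct.map LinearMap.id (W.counit ∘ₗ mulLeft k x) t) := by
    intro t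
    induction t using TensorProduct.induction_on with
    | zero => simp
    | tmul a b => simp [TensorProduct.assoc_tmul]
    | add a b ha hb => simp [TensorProduct.add_tmul, ha, hb]
  simpa [εsL, LinearMap.comp_apply, TensorProduct.mk_apply]
    using key (W.comul 1)

lemma etg_eq (g : H) (ψ : H →ₗ[k] k) (x : H) :
    W.etg g ψ x = (TensorProduct.lid k k)
      (TensorProduct.map (W.counit ∘ₗ mulLeft k (W.antipode x)) ψ (W.comul g)) := by
  have key : ∀ t : H ⊗[k] H,
      (TensorProduct.lid k k)
        (TensorProduct.map (W.counit ∘ₗ LinearMap.mul' k H) ψ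
          ((TensorProduct.assoc k H H H).symm (W.antipode x ⊗ₜ[k] t)))
      = (TensorProduct.lid k k)
        (TensorProduct.map (W.counit ∘ₗ mulLeft k (W.antipode x)) ψ t) := by
    intro t
    induction t using TensorProduct.induction_on with
    | zero => simp
    | tmul a b => simp [TensorProduct.assoc_symm_tmul]
    | add a b ha hb => simp [TensorProduct.tmul_add, ha, hb]
  simpa [etg, LinearMap.comp_apply, TensorProduct.mk_apply, LinearMap.flip_apply]
    using key (W.comul g)

lemma dualMul_apply (φ ψ : H →ₗ[k] k) (x : H) :
    W.dualMul φ ψ x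
      = (TensorProduct.lid k k) (TensorProduct.map φ ψ (W.comul x)) := rfl

lemma comul_mul_right {h : H} (hh : W.IsGroupLike h) (x : H) :
    W.comul (x * h)
      = TensorProduct.map (mulRight k h) (mulRight k h) (W.comul x) := by
  rw [W.comul_mul, hh.2.2, ← mul_assoc, ← W.comul_mul, mul_one, mul_pure]

lemma comul_mul_left {h : H} (hh : W.IsGroupLike h) (x : H) :
    W.comul (h * x)
      = TensorProduct.map (mulLeft k h) (mulLeft k h) (W.comul x) := by
  rw [W.comul_mul, hh.2.1, mul_assoc, ← W.comul_mul, one_mul, pure_mul]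

lemma counit_mul_right (w h : H) : W.counit (w * h) = W.counit (w * W.εtL h) := by
  have h1 := W.weak_counit_right w 1 h
  rw [mul_one] at h1
  have q1 : ∀ t : H ⊗[k] H, ∀ f : H →ₗ[k] k,
      W.counit (w * (TensorProduct.lid k H) (TensorProduct.map f LinearMap.id t))
        = (TensorProduct.lid k k)
            (TensorProduct.map f (W.counit ∘ₗ mulLeft k w) t) := by
    intro t f
    induction t using TensorProduct.induction_on with
    | zero => simp
    | tmul a b => simp [smul_eq_mul, mul_smul_comm]
    | add a b ha hb => simp [mul_add, ha, hb]
  rw [h1, εtL_eq, q1, lidk_comm]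

lemma counit_mul_left (a w : H) : W.counit (a * w) = W.counit (W.εsL a * w) := by
  have h1 := W.weak_counit_right a 1 w
  rw [mul_one] at h1
  have q3 : ∀ t : H ⊗[k] H, ∀ f : H →ₗ[k] k,
      W.counit ((TensorProduct.rid k H) (TensorProduct.map LinearMap.id f t) * w)
        = (TensorProduct.lid k k)
            (TensorProduct.map (W.counit ∘ₗ mulRight k w) f t) := by
    intro t f
    induction t using TensorProduct.induction_on with
    | zero => simp
    | tmul c b => simp [smul_eq_mul, smul_mul_assoc, mul_comm]
    | add c b ha hb => simp [add_mul, ha, hb]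
  rw [h1, εsL_eq, q3, lidk_comm]

lemma εtL_groupLike {h h' : H} (hh : W.IsGroupLike h) (hhh' : h * h' = 1) :
    W.εtL h = 1 := by
  have e1 : W.comul h
      = TensorProduct.map (mulRight k h) (mulRight k h) (W.comul 1) := by
    simpa using W.comul_mul_right hh 1
  have e2 := W.counit_comul h
  rw [e1, map_map, LinearMap.id_comp, lid_map_right', ← εtL_eq] at e2
  calc W.εtL h = W.εtL h * h * h' := by rw [mul_assoc, hhh', mul_one]
    _ = h * h' := by rw [e2]
    _ = 1 := hhh'

lemma εsL_groupLike {h h' : H} (hh : W.IsGroupLike h) (hh'h : h' * h = 1) :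
    W.εsL h = 1 := by
  have e1 : W.comul h
      = TensorProduct.map (mulLeft k h) (mulLeft k h) (W.comul 1) := by
    simpa using W.comul_mul_left hh 1
  have e2 := W.comul_counit h
  rw [e1, map_map, LinearMap.id_comp, rid_map_left', ← εsL_eq] at e2
  calc W.εsL h = h' * h * W.εsL h := by rw [hh'h, one_mul]
    _ = h' * h := by rw [mul_assoc, e2]
    _ = 1 := hh'h

lemma isGroupLike_inv {h h' : H} (hh : W.IsGroupLike h)
    (hhh' : h * h' = 1) (hh'h : h' * h = 1) : W.IsGroupLike h' := by
  have ccc : (h ⊗ₜ[k] h) * W.comul 1 = W.comul 1 * (h ⊗ₜ[k] h) :=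
    hh.2.1.symm.trans hh.2.2
  have oneT : ((1 : H) ⊗ₜ[k] (1 : H)) = (1 : H ⊗[k] H) :=
    (Algebra.TensorProduct.one_def).symm
  have EE : W.comul 1 * W.comul 1 = W.comul 1 := by
    rw [← W.comul_mul, mul_one]
  have step1 : ((h' ⊗ₜ[k] h') * W.comul 1) * W.comul h = W.comul 1 := by
    rw [hh.2.1]
    calc ((h' ⊗ₜ[k] h') * W.comul 1) * ((h ⊗ₜ[k] h) * W.comul 1)
        = (h' ⊗ₜ[k] h') * ((W.comul 1 * (h ⊗ₜ[k] h)) * W.comul 1) := by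
          rw [mul_assoc, mul_assoc]
      _ = (h' ⊗ₜ[k] h') * (((h ⊗ₜ[k] h) * W.comul 1) * W.comul 1) := by rw [ccc]
      _ = ((h' ⊗ₜ[k] h') * (h ⊗ₜ[k] h)) * (W.comul 1 * W.comul 1) := by
          rw [mul_assoc, mul_assoc]
      _ = W.comul 1 := by
          rw [Algebra.TensorProduct.tmul_mul_tmul, hh'h, oneT, EE, one_mul]
  have hA : W.comul h' = (h' ⊗ₜ[k] h') * W.comul 1 := by
    have e0 : W.comul h' = W.comul 1 * W.comul h' := by
      rw [← W.comul_mul, one_mul]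
    calc W.comul h' = W.comul 1 * W.comul h' := e0
      _ = (((h' ⊗ₜ[k] h') * W.comul 1) * W.comul h) * W.comul h' := by rw [step1]
      _ = ((h' ⊗ₜ[k] h') * W.comul 1) * (W.comul h * W.comul h') := by
          rw [mul_assoc]
      _ = ((h' ⊗ₜ[k] h') * W.comul 1) * W.comul 1 := by
          rw [← W.comul_mul, hhh']
      _ = (h' ⊗ₜ[k] h') * W.comul 1 := by rw [mul_assoc, EE]
  have ccc' : (h' ⊗ₜ[k] h') * W.comul 1 = W.comul 1 * (h' ⊗ₜ[k] h') := by
    have e1 := congrArg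
      (fun t => (h' ⊗ₜ[k] h') * t * (h' ⊗ₜ[k] h')) ccc
    calc (h' ⊗ₜ[k] h') * W.comul 1
        = ((h' ⊗ₜ[k] h') * W.comul 1) * ((h ⊗ₜ[k] h) * (h' ⊗ₜ[k] h')) := by
          rw [Algebra.TensorProduct.tmul_mul_tmul, hhh', oneT, mul_one]
      _ = (h' ⊗ₜ[k] h') * (W.comul 1 * (h ⊗ₜ[k] h)) * (h' ⊗ₜ[k] h') := by
          rw [mul_assoc, mul_assoc, mul_assoc]
      _ = (h' ⊗ₜ[k] h') * ((h ⊗ₜ[k] h) * W.comul 1) * (h' ⊗ₜ[k] h') := by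
          rw [ccc]
      _ = ((h' ⊗ₜ[k] h') * (h ⊗ₜ[k] h)) * (W.comul 1 * (h' ⊗ₜ[k] h')) := by
          rw [mul_assoc, mul_assoc, mul_assoc]
      _ = W.comul 1 * (h' ⊗ₜ[k] h') := by
          rw [Algebra.TensorProduct.tmul_mul_tmul, hh'h, oneT, one_mul]
  exact ⟨⟨⟨h', h, hh'h, hhh'⟩, rfl⟩, hA, hA.trans ccc'⟩

/-- convolution product on `End(H)`. -/
noncomputable def conv (f g : H →ₗ[k] H) : H →ₗ[k] H :=
  LinearMap.mul' k H ∘ₗ TensorProduct.map f g ∘ₗ W.comul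

lemma conv_apply (f g : H →ₗ[k] H) (x : H) :
    W.conv f g x = LinearMap.mul' k H (TensorProduct.map f g (W.comul x)) := rfl

lemma conv_assoc (f g e : H →ₗ[k] H) :
    W.conv (W.conv f g) e = W.conv f (W.conv g e) := by
  have CA : ∀ t : (H ⊗[k] H) ⊗[k] H,
      LinearMap.mul' k H
        (TensorProduct.map (LinearMap.mul' k H ∘ₗ TensorProduct.map f g) e t)
      = LinearMap.mul' k H
        (TensorProduct.map f (LinearMap.mul' k H ∘ₗ TensorProduct.map g e)
          ((TensorProduct.assoc k H H H) t)) := by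
    intro t
    induction t using TensorProduct.induction_on with
    | zero => simp
    | add a b ha hb => simp [ha, hb]
    | tmul s c =>
      induction s using TensorProduct.induction_on with
      | zero => simp [TensorProduct.zero_tmul]
      | add a b ha hb =>
        simp only [TensorProduct.add_tmul, map_add]
        rw [ha, hb]
      | tmul a b => simp [TensorProduct.assoc_tmul, mul_assoc]
  ext x
  have l1 : TensorProduct.map (W.conv f g) e (W.comul x)
      = TensorProduct.map (LinearMap.mul' k H ∘ₗ TensorProduct.map f g) e
          ((TensorProduct.map W.comul LinearMap.id) (W.comul x)) := by
    rw [map_map, LinearMap.comp_id]; rfl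
  have l2 : TensorProduct.map f (W.conv g e) (W.comul x)
      = TensorProduct.map f (LinearMap.mul' k H ∘ₗ TensorProduct.map g e)
          ((TensorProduct.map LinearMap.id W.comul) (W.comul x)) := by
    rw [map_map, LinearMap.comp_id]; rfl
  show LinearMap.mul' k H (TensorProduct.map (W.conv f g) e (W.comul x))
      = LinearMap.mul' k H (TensorProduct.map f (W.conv g e) (W.comul x))
  rw [l1, l2, CA, W.coassoc x]

lemma conv_antipode_id : W.conv W.antipode LinearMap.id = W.εsL := by
  ext x
  rw [conv_apply, W.antipode_left x, εsL_eq]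

lemma conv_id_antipode : W.conv LinearMap.id W.antipode = W.εtL := by
  ext x
  rw [conv_apply, W.antipode_right x, εtL_eq]

lemma conv_SidS :
    W.conv (W.conv W.antipode LinearMap.id) W.antipode = W.antipode := by
  ext x
  rw [conv_apply]
  have l1 : TensorProduct.map (W.conv W.antipode LinearMap.id) W.antipode
        (W.comul x)
      = TensorProduct.map
          (LinearMap.mul' k H ∘ₗ TensorProduct.map W.antipode LinearMap.id)
          W.antipode
          ((TensorProduct.map W.comul LinearMap.id) (W.comul x)) := by
    rw [map_map, LinearMap.comp_id]; rfl
  rw [l1, W.antipode_mid x]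

lemma conv_εtL_id : W.conv W.εtL LinearMap.id = LinearMap.id := by
  have key : ∀ t : H ⊗[k] H,
      LinearMap.mul' k H (TensorProduct.map W.εtL LinearMap.id t)
        = (TensorProduct.lid k H)
            (TensorProduct.map W.counit LinearMap.id (W.comul 1 * t)) := by
    intro t
    induction t using TensorProduct.induction_on with
    | zero => simp
    | add a b ha hb => simp [mul_add, ha, hb]
    | tmul a b =>
      rw [mul_pure, map_map, LinearMap.id_comp, lid_map_right']
      simp [εtL_eq]
  ext x
  have e : W.comul 1 * W.comul x = W.comul x := by rw [← W.comul_mul, one_mul]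
  show LinearMap.mul' k H (TensorProduct.map W.εtL LinearMap.id (W.comul x)) = x
  rw [key, e, W.counit_comul x]

lemma conv_id_εsL : W.conv LinearMap.id W.εsL = LinearMap.id := by
  have key : ∀ t : H ⊗[k] H,
      LinearMap.mul' k H (TensorProduct.map LinearMap.id W.εsL t)
        = (TensorProduct.rid k H)
            (TensorProduct.map LinearMap.id W.counit (t * W.comul 1)) := by
    intro t
    induction t using TensorProduct.induction_on with
    | zero => simp
    | add a b ha hb => simp [add_mul, ha, hb]
    | tmul a b =>
      rw [pure_mul, map_map, LinearMap.id_comp, rid_map_left']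
      simp [εsL_eq]
  ext x
  have e : W.comul x * W.comul 1 = W.comul x := by rw [← W.comul_mul, mul_one]
  show LinearMap.mul' k H (TensorProduct.map LinearMap.id W.εsL (W.comul x)) = x
  rw [key, e, W.comul_counit x]

variable {h h' : H}

lemma εtL_mul (hh : W.IsGroupLike h) (hhh' : h * h' = 1) (x : H) :
    W.εtL (x * h) = W.εtL x := by
  rw [εtL_eq, εtL_eq]
  have e : W.counit ∘ₗ mulRight k (x * h) = W.counit ∘ₗ mulRight k x := by
    ext u
    simp only [LinearMap.comp_apply, mulRight_apply]
    rw [← mul_assoc, counit_mul_right, W.εtL_groupLike hh hhh', mul_one]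
  rw [e]

lemma εsL_mul (hh : W.IsGroupLike h) (hhh' : h * h' = 1) (hh'h : h' * h = 1)
    (x : H) : W.εsL (x * h) = h' * W.εsL x * h := by
  have ccc2 : TensorProduct.map (mulLeft k h) (mulLeft k h) (W.comul 1)
      = TensorProduct.map (mulRight k h) (mulRight k h) (W.comul 1) := by
    rw [← pure_mul, ← mul_pure, ← hh.2.1, ← hh.2.2]
  have lcan : mulLeft k h' ∘ₗ mulLeft k h = (LinearMap.id : H →ₗ[k] H) := by
    ext u
    simp only [LinearMap.comp_apply, mulLeft_apply, LinearMap.id_coe, id_eq]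
    rw [← mul_assoc, hh'h, one_mul]
  have REL : TensorProduct.map LinearMap.id (mulLeft k h) (W.comul 1)
      = TensorProduct.map (mulLeft k h' ∘ₗ mulRight k h) (mulRight k h)
          (W.comul 1) := by
    have e := congrArg (TensorProduct.map (mulLeft k h') LinearMap.id) ccc2
    rw [map_map, map_map, lcan, LinearMap.id_comp] at e
    exact e
  rw [εsL_eq]
  have fc : W.counit ∘ₗ mulLeft k (x * h)
      = (W.counit ∘ₗ mulLeft k x) ∘ₗ mulLeft k h := by
    ext u
    simp only [LinearMap.comp_apply, mulLeft_apply]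
    rw [mul_assoc]
  rw [fc]
  have split : TensorProduct.map LinearMap.id
        ((W.counit ∘ₗ mulLeft k x) ∘ₗ mulLeft k h) (W.comul 1)
      = TensorProduct.map LinearMap.id (W.counit ∘ₗ mulLeft k x)
          (TensorProduct.map LinearMap.id (mulLeft k h) (W.comul 1)) := by
    rw [map_map, LinearMap.id_comp]
  rw [split, REL, map_map, LinearMap.id_comp]
  have fc2 : (W.counit ∘ₗ mulLeft k x) ∘ₗ mulRight k h
      = W.counit ∘ₗ mulLeft k x := by
    ext u
    simp only [LinearMap.comp_apply, mulLeft_apply, mulRight_apply]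
    rw [← mul_assoc, counit_mul_right, W.εtL_groupLike hh hhh', mul_one]
  rw [fc2]
  rw [show mulLeft k h' ∘ₗ mulRight k h
      = mulLeft k h' ∘ₗ mulRight k h ∘ₗ (LinearMap.id : H →ₗ[k] H) by
    rw [LinearMap.comp_id]]
  rw [rid_map_conj, ← εsL_eq]

end Aux

end WeakHopf

namespace WeakHopf

section Aux2

open TensorProduct LinearMap

variable {k H : Type*} [Field k] [Ring H] [Algebra k H] (W : WeakHopf k H)
variable {h h' : H}

lemma conv_R_A (hh : W.IsGroupLike h) (hhh' : h * h' = 1) :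
    W.conv (mulRight k h) (W.antipode ∘ₗ mulRight k h) = W.εtL := by
  ext x
  rw [conv_apply]
  have e : TensorProduct.map (mulRight k h) (W.antipode ∘ₗ mulRight k h)
        (W.comul x)
      = TensorProduct.map LinearMap.id W.antipode (W.comul (x * h)) := by
    rw [W.comul_mul_right hh, map_map, LinearMap.id_comp]
  rw [e]
  have e2 := DFunLike.congr_fun W.conv_id_antipode (x * h)
  rw [conv_apply] at e2
  rw [e2, W.εtL_mul hh hhh']

lemma conv_R_B (hhh' : h * h' = 1) :
    W.conv (mulRight k h) (mulLeft k h' ∘ₗ W.antipode) = W.εtL := by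
  ext x
  rw [conv_apply]
  rw [show mulRight k h = mulRight k h ∘ₗ (LinearMap.id : H →ₗ[k] H) by
    rw [LinearMap.comp_id]]
  rw [mul'_map_cancel hhh']
  have e2 := DFunLike.congr_fun W.conv_id_antipode x
  rw [conv_apply] at e2
  exact e2

lemma conv_A_R (hh : W.IsGroupLike h) (hhh' : h * h' = 1) (hh'h : h' * h = 1)
    (x : H) :
    W.conv (W.antipode ∘ₗ mulRight k h) (mulRight k h) x
      = h' * W.εsL x * h := by
  rw [conv_apply]
  have e : TensorProduct.map (W.antipode ∘ₗ mulRight k h) (mulRight k h)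
        (W.comul x)
      = TensorProduct.map W.antipode LinearMap.id (W.comul (x * h)) := by
    rw [W.comul_mul_right hh, map_map, LinearMap.id_comp]
  rw [e]
  have e2 := DFunLike.congr_fun W.conv_antipode_id (x * h)
  rw [conv_apply] at e2
  rw [e2, W.εsL_mul hh hhh' hh'h]

lemma conv_B_R (x : H) :
    W.conv (mulLeft k h' ∘ₗ W.antipode) (mulRight k h) x
      = h' * W.εsL x * h := by
  rw [conv_apply]
  rw [show mulRight k h = mulRight k h ∘ₗ (LinearMap.id : H →ₗ[k] H) by
    rw [LinearMap.comp_id]]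
  rw [mul'_map_conj]
  have e2 := DFunLike.congr_fun W.conv_antipode_id x
  rw [conv_apply] at e2
  rw [e2]

lemma conv_Sid_comp_R (hh : W.IsGroupLike h) :
    (W.conv W.antipode LinearMap.id) ∘ₗ mulRight k h
      = W.conv (W.antipode ∘ₗ mulRight k h) (mulRight k h) := by
  ext u
  simp only [LinearMap.comp_apply, mulRight_apply]
  rw [conv_apply, conv_apply, W.comul_mul_right hh, map_map,
    LinearMap.id_comp]

/-- Anti-multiplicativity of the antipode against a group-like element. -/
lemma antipode_comp_mulRight (hh : W.IsGroupLike h) (hhh' : h * h' = 1)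
    (hh'h : h' * h = 1) :
    W.antipode ∘ₗ mulRight k h = mulLeft k h' ∘ₗ W.antipode := by
  have stepiv : W.antipode ∘ₗ mulRight k h
      = W.conv (W.conv (W.antipode ∘ₗ mulRight k h) (mulRight k h))
          (W.antipode ∘ₗ mulRight k h) := by
    ext x
    simp only [LinearMap.comp_apply, mulRight_apply]
    have e1 := DFunLike.congr_fun W.conv_SidS (x * h)
    rw [conv_apply] at e1
    rw [← e1]
    rw [conv_apply, W.comul_mul_right hh, map_map,
      W.conv_Sid_comp_R hh]
  have eqAB : W.conv (W.antipode ∘ₗ mulRight k h) (mulRight k h)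
      = W.conv (mulLeft k h' ∘ₗ W.antipode) (mulRight k h) := by
    ext x
    rw [W.conv_A_R hh hhh' hh'h, W.conv_B_R]
  have cSe : W.conv W.antipode W.εtL = W.antipode := by
    calc W.conv W.antipode W.εtL
        = W.conv W.antipode (W.conv LinearMap.id W.antipode) := by
          rw [W.conv_id_antipode]
      _ = W.conv (W.conv W.antipode LinearMap.id) W.antipode :=
          (W.conv_assoc _ _ _).symm
      _ = W.antipode := W.conv_SidS
  have stepv : W.conv (mulLeft k h' ∘ₗ W.antipode) W.εtL
      = mulLeft k h' ∘ₗ W.antipode := by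
    ext x
    rw [conv_apply, mul'_map_leftc]
    have e3 := DFunLike.congr_fun cSe x
    rw [conv_apply] at e3
    rw [e3]
    simp
  calc W.antipode ∘ₗ mulRight k h
      = W.conv (W.conv (W.antipode ∘ₗ mulRight k h) (mulRight k h))
          (W.antipode ∘ₗ mulRight k h) := stepiv
    _ = W.conv (W.conv (mulLeft k h' ∘ₗ W.antipode) (mulRight k h))
          (W.antipode ∘ₗ mulRight k h) := by rw [eqAB]
    _ = W.conv (mulLeft k h' ∘ₗ W.antipode)
          (W.conv (mulRight k h) (W.antipode ∘ₗ mulRight k h)) :=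
        W.conv_assoc _ _ _
    _ = W.conv (mulLeft k h' ∘ₗ W.antipode) W.εtL := by
        rw [W.conv_R_A hh hhh']
    _ = mulLeft k h' ∘ₗ W.antipode := stepv

lemma antipode_mul_gl (hh : W.IsGroupLike h) (hhh' : h * h' = 1)
    (hh'h : h' * h = 1) (x : H) :
    W.antipode (x * h) = h' * W.antipode x := by
  have := DFunLike.congr_fun (W.antipode_comp_mulRight hh hhh' hh'h) x
  simpa using this

/-- The key identity: `ε_t^g(h'⇀χ)∘R_h = ε_t^{gh'}(χ)`. -/
lemma etg_shift (hh : W.IsGroupLike h) (hhh' : h * h' = 1)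
    (hh'h : h' * h = 1) (g : H) (χ : H →ₗ[k] k) :
    W.etg g (χ ∘ₗ mulRight k h') ∘ₗ mulRight k h = W.etg (g * h') χ := by
  have hh2 : W.IsGroupLike h' := W.isGroupLike_inv hh hhh' hh'h
  ext x
  simp only [LinearMap.comp_apply, mulRight_apply]
  rw [etg_eq, etg_eq]
  have hg' : W.comul g
      = TensorProduct.map (mulRight k h) (mulRight k h) (W.comul (g * h')) := by
    conv_lhs => rw [show g = g * h' * h by rw [mul_assoc, hh'h, mul_one]]
    exact W.comul_mul_right hh _
  rw [hg', map_map]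
  have f1 : (W.counit ∘ₗ mulLeft k (W.antipode (x * h))) ∘ₗ mulRight k h
      = W.counit ∘ₗ mulLeft k (W.antipode x) := by
    ext u
    simp only [LinearMap.comp_apply, mulLeft_apply, mulRight_apply]
    rw [W.antipode_mul_gl hh hhh' hh'h]
    calc W.counit (h' * W.antipode x * (u * h))
        = W.counit (h' * (W.antipode x * u) * h) := by
          rw [mul_assoc, mul_assoc, mul_assoc]
      _ = W.counit (h' * (W.antipode x * u) * W.εtL h) := by
          rw [counit_mul_right]
      _ = W.counit (h' * (W.antipode x * u)) := by
          rw [W.εtL_groupLike hh hhh', mul_one]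
      _ = W.counit (W.εsL h' * (W.antipode x * u)) := by
          rw [counit_mul_left]
      _ = W.counit (W.antipode x * u) := by
          rw [W.εsL_groupLike hh2 hhh', one_mul]
  have f2 : (χ ∘ₗ mulRight k h') ∘ₗ mulRight k h = χ := by
    ext u
    simp only [LinearMap.comp_apply, mulRight_apply]
    rw [mul_assoc, hhh', mul_one]
  rw [f1, f2]

lemma dualMul_comp_mulRight (hh : W.IsGroupLike h) (α β : H →ₗ[k] k) :
    W.dualMul α β ∘ₗ mulRight k h
      = W.dualMul (α ∘ₗ mulRight k h) (β ∘ₗ mulRight k h) := by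
  ext x
  simp only [LinearMap.comp_apply, mulRight_apply]
  rw [dualMul_apply, dualMul_apply, W.comul_mul_right hh, map_map]

lemma lset_mapsTo (hh : W.IsGroupLike h) (hhh' : h * h' = 1)
    (hh'h : h' * h = 1) (g : H) {φ : H →ₗ[k] k} (hφ : φ ∈ W.Lset g) :
    φ ∘ₗ mulRight k h ∈ W.Lset (g * h') := by
  intro χ
  have f2 : (χ ∘ₗ mulRight k h') ∘ₗ mulRight k h = χ := by
    ext u
    simp only [LinearMap.comp_apply, mulRight_apply]
    rw [mul_assoc, hhh', mul_one]
  calc W.dualMul χ (φ ∘ₗ mulRight k h)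
      = W.dualMul ((χ ∘ₗ mulRight k h') ∘ₗ mulRight k h)
          (φ ∘ₗ mulRight k h) := by rw [f2]
    _ = W.dualMul (χ ∘ₗ mulRight k h') φ ∘ₗ mulRight k h :=
        (W.dualMul_comp_mulRight hh _ _).symm
    _ = W.dualMul (W.etg g (χ ∘ₗ mulRight k h')) φ ∘ₗ mulRight k h := by
        rw [hφ (χ ∘ₗ mulRight k h')]
    _ = W.dualMul (W.etg g (χ ∘ₗ mulRight k h') ∘ₗ mulRight k h)
          (φ ∘ₗ mulRight k h) := W.dualMul_comp_mulRight hh _ _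
    _ = W.dualMul (W.etg (g * h') χ) (φ ∘ₗ mulRight k h) := by
        rw [W.etg_shift hh hhh' hh'h]

end Aux2

end WeakHopf

/-- For group-like g, h ∈ G(H), φ ↦ (h⇀φ) is a linear
isomorphism from L_g onto L_{gh⁻¹}. -/
theorem weakHopf_Lg_shift {k H : Type*} [Field k] [Ring H] [Algebra k H]
    [FiniteDimensional k H] (W : WeakHopf k H) (g h h' : H)
    (hg : W.IsGroupLike g) (hh : W.IsGroupLike h)
    (hhh' : h * h' = 1) (hh'h : h' * h = 1) :
    Set.BijOn (fun φ : H →ₗ[k] k => φ ∘ₗ LinearMap.mulRight k h)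
      (W.Lset g) (W.Lset (g * h')) := by
  have hh2 : W.IsGroupLike h' := W.isGroupLike_inv hh hhh' hh'h
  have cancel1 : ∀ φ : H →ₗ[k] k,
      (φ ∘ₗ LinearMap.mulRight k h) ∘ₗ LinearMap.mulRight k h' = φ := by
    intro φ
    ext u
    simp only [LinearMap.comp_apply, LinearMap.mulRight_apply]
    rw [mul_assoc, hh'h, mul_one]
  have cancel2 : ∀ φ : H →ₗ[k] k,
      (φ ∘ₗ LinearMap.mulRight k h') ∘ₗ LinearMap.mulRight k h = φ := by
    intro φ
    ext u
    simp only [LinearMap.comp_apply, LinearMap.mulRight_apply]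
    rw [mul_assoc, hhh', mul_one]
  refine ⟨fun φ hφ => W.lset_mapsTo hh hhh' hh'h g hφ, ?_, ?_⟩
  · intro φ₁ _ φ₂ _ heq
    simp only at heq
    have := congrArg (fun ρ : H →ₗ[k] k => ρ ∘ₗ LinearMap.mulRight k h') heq
    simpa [cancel1] using this
  · intro φ' hφ'
    refine ⟨φ' ∘ₗ LinearMap.mulRight k h', ?_, ?_⟩
    · have mem := W.lset_mapsTo hh2 hh'h hhh' (g * h') hφ'
      rwa [mul_assoc, hh'h, mul_one] at mem
    · exact cancel2 φ'
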